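/- Suppose there are no local flows, i.e. Σ_{l=1}^L a_{lr} ≥ 2 for every flow r. Let each utility u_r : [0,∞) → ℝ be strictly increasing and let the weights b_r ≥ 0 be arbitrary. Then any feasible strategy profile S such that for all links l₁, l₂ and every flow r with a_{l₁r} = a_{l₂r} = 1 one has s_{l₁r} = s_{l₂r} (i.e., all links on a flow's path allocate it the same amount) is a pure Nash equilibrium of the capacity allocation game. -/

import Mathlib

/-! Equal allocations along a path make the common amount the flow's minimum. A deviating
link only changes its own entry, and since the flow is not local another link on the path
still offers the old amount, so no flow of the deviator gets a larger minimum; monotone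
utilities and nonnegative weights then keep every term of its payoff from growing. -/

open Finset

/-- The minimum allocation for flow `r` over all links on its path. -/
noncomputable def linkMin {L R : ℕ} (a : Fin L → Fin R → Bool)
    (S : Fin L → Fin R → ℝ) (r : Fin R) : ℝ :=
  sInf {v : ℝ | ∃ k, a k r = true ∧ v = S k r}

/-- Feasibility of a single player's (link's) strategy. -/
def FeasibleStrat {L R : ℕ} (a : Fin L → Fin R → Bool) (c : Fin L → ℝ)
    (l : Fin L) (s : Fin R → ℝ) : Prop :=
  (∀ r, 0 ≤ s r) ∧ (∀ r, a l r = false → s r = 0) ∧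
    (∑ r ∈ Finset.univ.filter (fun r => a l r = true), s r) ≤ c l

/-- Feasibility of a full strategy profile. -/
def FeasibleProfile {L R : ℕ} (a : Fin L → Fin R → Bool) (c : Fin L → ℝ)
    (S : Fin L → Fin R → ℝ) : Prop :=
  ∀ l, FeasibleStrat a c l (S l)

/-- Payoff of player `l`: weighted utilities of minimum allocations of its flows. -/
noncomputable def payoff {L R : ℕ} (a : Fin L → Fin R → Bool)
    (b : Fin R → ℝ) (u : Fin R → ℝ → ℝ) (l : Fin L) (S : Fin L → Fin R → ℝ) : ℝ :=
  ∑ r ∈ Finset.univ.filter (fun r => a l r = true), b r * u r (linkMin a S r)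

/-- Pure Nash equilibrium: no player can strictly improve by a unilateral feasible deviation. -/
def NashEq {L R : ℕ} (a : Fin L → Fin R → Bool) (c : Fin L → ℝ)
    (b : Fin R → ℝ) (u : Fin R → ℝ → ℝ) (S : Fin L → Fin R → ℝ) : Prop :=
  ∀ l s', FeasibleStrat a c l s' →
    payoff a b u l (Function.update S l s') ≤ payoff a b u l S

/-- Social welfare of a profile. -/
noncomputable def welfare {L R : ℕ} (a : Fin L → Fin R → Bool)
    (u : Fin R → ℝ → ℝ) (S : Fin L → Fin R → ℝ) : ℝ :=
  ∑ r, u r (linkMin a S r)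

section LinkMin

variable {L R : ℕ} {a : Fin L → Fin R → Bool} {S : Fin L → Fin R → ℝ} {r : Fin R}

theorem linkMin_nonneg (hS : ∀ k, 0 ≤ S k r) : 0 ≤ linkMin a S r :=
  Real.sInf_nonneg <| by rintro _ ⟨k, -, rfl⟩; exact hS k

theorem linkMin_le {k : Fin L} (hS : ∀ k, 0 ≤ S k r) (hk : a k r = true) :
    linkMin a S r ≤ S k r :=
  csInf_le ⟨0, by rintro _ ⟨j, -, rfl⟩; exact hS j⟩ ⟨k, hk, rfl⟩

theorem linkMin_eq_of_forall_eq {l : Fin L} (hl : a l r = true)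
    (heq : ∀ k, a k r = true → S k r = S l r) : linkMin a S r = S l r := by
  have hset : {v : ℝ | ∃ k, a k r = true ∧ v = S k r} = {S l r} := by
    ext v
    constructor
    · rintro ⟨k, hk, rfl⟩
      exact heq k hk
    · rintro rfl
      exact ⟨l, hl, rfl⟩
  rw [linkMin, hset, csInf_singleton]

theorem exists_other_link_of_two_le_card
    (h : 2 ≤ (Finset.univ.filter (fun l => a l r = true)).card) (l : Fin L) :
    ∃ k, a k r = true ∧ k ≠ l := by
  obtain ⟨k, hk, hkl⟩ := Finset.exists_mem_ne h l
  exact ⟨k, (Finset.mem_filter.mp hk).2, hkl⟩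

theorem linkMin_update_le_of_forall_eq {l k : Fin L} {s : Fin R → ℝ}
    (hS : ∀ j, 0 ≤ Function.update S l s j r) (hl : a l r = true) (hk : a k r = true)
    (hkl : k ≠ l) (heq : ∀ j, a j r = true → S j r = S l r) :
    linkMin a (Function.update S l s) r ≤ linkMin a S r :=
  calc linkMin a (Function.update S l s) r ≤ Function.update S l s k r := linkMin_le hS hk
    _ = linkMin a S r := by
      rw [Function.update_of_ne hkl, heq k hk, linkMin_eq_of_forall_eq hl heq]

end LinkMin

theorem FeasibleProfile.update {L R : ℕ} {a : Fin L → Fin R → Bool} {c : Fin L → ℝ}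
    {S : Fin L → Fin R → ℝ} {l : Fin L} {s : Fin R → ℝ} (hS : FeasibleProfile a c S)
    (hs : FeasibleStrat a c l s) : FeasibleProfile a c (Function.update S l s) := by
  intro k
  rcases eq_or_ne k l with rfl | hkl
  · rwa [Function.update_self]
  · rw [Function.update_of_ne hkl]
    exact hS k

theorem equal_allocations_nash_no_local_flows_general
    {L R : ℕ} (a : Fin L → Fin R → Bool) (c : Fin L → ℝ)
    (b : Fin R → ℝ) (u : Fin R → ℝ → ℝ) (S : Fin L → Fin R → ℝ)
    (hnolocal : ∀ r : Fin R, 2 ≤ (Finset.univ.filter (fun l => a l r = true)).card)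
    (hmono : ∀ r, StrictMonoOn (u r) (Set.Ici 0))
    (hb : ∀ r, 0 ≤ b r)
    (hS : FeasibleProfile a c S)
    (heq : ∀ l₁ l₂ : Fin L, ∀ r : Fin R, a l₁ r = true → a l₂ r = true → S l₁ r = S l₂ r) :
    NashEq a c b u S := by
  intro l s' hs'
  have hS' := hS.update hs'
  refine Finset.sum_le_sum fun r hr => mul_le_mul_of_nonneg_left ?_ (hb r)
  have hlr : a l r = true := (Finset.mem_filter.mp hr).2
  obtain ⟨k, hkr, hkl⟩ := exists_other_link_of_two_le_card (hnolocal r) l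
  have heq_r : ∀ j, a j r = true → S j r = S l r := fun j hj => heq j l r hj hlr
  exact (hmono r).monotoneOn (linkMin_nonneg fun j => (hS' j).1 r)
    (linkMin_nonneg fun j => (hS j).1 r)
    (linkMin_update_le_of_forall_eq (fun j => (hS' j).1 r) hlr hkr hkl heq_r)

/-- if there are no local flows (every flow traverses at least two links),
then any feasible profile in which all links on a flow's path allocate it the same amount
is a pure Nash equilibrium, for any strictly increasing utilities and any weights. -/
theorem equal_allocations_nash_no_local_flows
    {L R : ℕ} (a : Fin L → Fin R → Bool) (c : Fin L → ℝ)
    (b : Fin R → ℝ) (u : Fin R → ℝ → ℝ) (S : Fin L → Fin R → ℝ)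
    (hc : ∀ l, 0 < c l)
    (hnolocal : ∀ r : Fin R, 2 ≤ (Finset.univ.filter (fun l => a l r = true)).card)
    (hmono : ∀ r, StrictMonoOn (u r) (Set.Ici 0))
    (hb : ∀ r, 0 ≤ b r)
    (hS : FeasibleProfile a c S)
    (heq : ∀ l₁ l₂ : Fin L, ∀ r : Fin R, a l₁ r = true → a l₂ r = true → S l₁ r = S l₂ r) :
    NashEq a c b u S :=
  equal_allocations_nash_no_local_flows_general a c b u S hnolocal hmono hb hS heq
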